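/- arXiv:2306.05158 — 5 statements merged into one kernel-verified Lean document; each statement's English description precedes it below -/
import Mathlib

section
/- Define the Mittag-Leffler polynomials g_n(σ) by the generating function ((1+z)/(1-z))^σ = ∑_{n=0}^∞ g_n(σ) z^n for |z| < 1, i.e., g_n(σ) is the n-th Taylor coefficient at z = 0 of ((1+z)/(1-z))^σ. Then g_0(σ) = 1 and for n ≥ 1, g_n(σ) = 2σ · ∑_{j=0}^{n-1} [(1-n)_j (1-σ)_j / ((2)_j j!)] · 2^j. -/
/-!
The generating function `f z = ((1 + z) / (1 - z)) ^ σ` solves `(1 - z²) f' = 2 σ f`, so its Taylor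
coefficients satisfy `(m + 2) a (m + 2) = 2 σ a (m + 1) + m a m`. Since
`(1 - n)_j = (-1)^j j! C(n-1, j)` and `σ (1 - σ)_j = (-1)^j (j+1)! C(σ, j+1)`, the hypergeometric sum
equals `∑ j, 2^(j+1) C(n-1, j) C(σ, j+1)`; Pascal's rule and `σ C(σ, k) = (k+1) C(σ, k+1) + k C(σ, k)`
show that this obeys the same recurrence, with the same first two values.
-/

noncomputable def poch (a : ℂ) (n : ℕ) : ℂ := (ascPochhammer ℂ n).eval a

/-- `n`-th Taylor coefficient at `0` of a function `f : ℂ → ℂ`. -/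
noncomputable def taylorCoeff (f : ℂ → ℂ) (n : ℕ) : ℂ :=
  iteratedDeriv n f 0 / (Nat.factorial n)

/-- Mittag-Leffler polynomial `g_n(σ)`, the `n`-th Taylor coefficient at `z = 0`
of `((1+z)/(1-z))^σ`. -/
noncomputable def mittagLeffler (n : ℕ) (σ : ℂ) : ℂ :=
  taylorCoeff (fun z => ((1 + z) / (1 - z)) ^ σ) n

open Filter Finset Complex Topology

section TaylorCoeff

variable {f g : ℂ → ℂ} {n : ℕ}

lemma taylorCoeff_congr (h : f =ᶠ[𝓝 0] g) : taylorCoeff f n = taylorCoeff g n := by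
  rw [taylorCoeff, taylorCoeff, h.iteratedDeriv_eq]

lemma taylorCoeff_add (hf : ContDiffAt ℂ n f 0) (hg : ContDiffAt ℂ n g 0) :
    taylorCoeff (fun z => f z + g z) n = taylorCoeff f n + taylorCoeff g n := by
  rw [taylorCoeff, iteratedDeriv_fun_add hf hg, add_div]; rfl

lemma taylorCoeff_const_mul (c : ℂ) :
    taylorCoeff (fun z => c * f z) n = c * taylorCoeff f n := by
  rw [taylorCoeff, iteratedDeriv_const_mul_field, mul_div_assoc]; rfl

lemma taylorCoeff_deriv :
    taylorCoeff (deriv f) n = (n + 1) * taylorCoeff f (n + 1) := by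
  have : (n.factorial : ℂ) ≠ 0 := by exact_mod_cast n.factorial_ne_zero
  rw [taylorCoeff, taylorCoeff, ← iteratedDeriv_succ', Nat.factorial_succ]
  push_cast
  field_simp

lemma taylorCoeff_id_mul_zero : taylorCoeff (fun z => z * g z) 0 = 0 := by
  simp [taylorCoeff]

lemma taylorCoeff_id_mul_succ (hg : ContDiffAt ℂ (n + 1) g 0) :
    taylorCoeff (fun z => z * g z) (n + 1) = taylorCoeff g n := by
  have hfac : (n.factorial : ℂ) ≠ 0 := by exact_mod_cast n.factorial_ne_zero
  have hleibniz : iteratedDeriv (n + 1) (fun z => z * g z) 0 = (n + 1) * iteratedDeriv n g 0 := by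
    -- only the `i = 1` term of the Leibniz expansion survives
    rw [iteratedDeriv_fun_mul (by exact_mod_cast contDiffAt_id) (by exact_mod_cast hg)]
    simp [iteratedDeriv_fun_id_zero]
  rw [taylorCoeff, taylorCoeff, hleibniz, Nat.factorial_succ]
  push_cast
  field_simp

end TaylorCoeff

lemma one_sub_ne_zero_of_norm_lt_one {z : ℂ} (hz : ‖z‖ < 1) : 1 - z ≠ 0 :=
  sub_ne_zero.2 fun h => by simp [← h] at hz

-- `re ((1 + z) / (1 - z)) = (1 - ‖z‖ ^ 2) / normSq (1 - z)`.
lemma one_add_div_one_sub_mem_slitPlane {z : ℂ} (hz : ‖z‖ < 1) :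
    (1 + z) / (1 - z) ∈ slitPlane := by
  have hne := one_sub_ne_zero_of_norm_lt_one hz
  have hsq : z.re * z.re + z.im * z.im < 1 := by
    rw [← normSq_apply, normSq_eq_norm_sq]
    nlinarith [norm_nonneg z]
  refine Or.inl ?_
  rw [div_re, ← add_div]
  refine div_pos ?_ (normSq_pos.2 hne)
  simp only [add_re, sub_re, add_im, sub_im, one_re, one_im]
  nlinarith

lemma poch_two (j : ℕ) : poch 2 j = (j + 1).factorial := by
  have := factorial_mul_ascPochhammer ℂ 1 j
  rw [Nat.factorial_one, Nat.cast_one, one_mul, add_comm 1 j] at this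
  rw [poch, ← this]
  norm_num

lemma poch_neg_natCast (p j : ℕ) : poch (-p) j = (-1) ^ j * j.factorial * p.choose j := by
  rw [poch, ascPochhammer_eval_neg_eq_descPochhammer, descPochhammer_eval_eq_descFactorial,
    Nat.descFactorial_eq_factorial_mul_choose]
  push_cast
  ring

namespace MittagLeffler

variable (σ : ℂ)

noncomputable def genFun (z : ℂ) : ℂ := ((1 + z) / (1 - z)) ^ σ

variable {σ}

lemma analyticAt_genFun {z : ℂ} (hz : ‖z‖ < 1) : AnalyticAt ℂ (genFun σ) z :=
  ((analyticAt_const.add analyticAt_id).div (analyticAt_const.sub analyticAt_id)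
    (one_sub_ne_zero_of_norm_lt_one hz)).cpow analyticAt_const
    (one_add_div_one_sub_mem_slitPlane hz)

lemma one_sub_sq_mul_deriv_genFun {z : ℂ} (hz : ‖z‖ < 1) :
    (1 - z ^ 2) * deriv (genFun σ) z = 2 * σ * genFun σ z := by
  have hsub := one_sub_ne_zero_of_norm_lt_one hz
  have hadd : 1 + z ≠ 0 := by
    rintro h
    simp [eq_neg_of_add_eq_zero_right h] at hz
  have hquot := ((hasDerivAt_id' z).const_add 1).fun_div ((hasDerivAt_id' z).const_sub 1) hsub
  unfold genFun
  rw [(hquot.cpow_const (one_add_div_one_sub_mem_slitPlane hz)).deriv,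
    cpow_sub _ _ (div_ne_zero hadd hsub), cpow_one]
  field_simp
  ring

lemma deriv_genFun_eventuallyEq :
    deriv (genFun σ) =ᶠ[𝓝 0] fun z => z * (z * deriv (genFun σ) z) + 2 * σ * genFun σ z := by
  filter_upwards [Metric.ball_mem_nhds (0 : ℂ) one_pos] with z hz
  rw [mem_ball_zero_iff] at hz
  linear_combination one_sub_sq_mul_deriv_genFun (σ := σ) hz

lemma succ_mul_taylorCoeff_genFun (m : ℕ) :
    (m + 1) * taylorCoeff (genFun σ) (m + 1) =
      taylorCoeff (fun z => z * (z * deriv (genFun σ) z)) m + 2 * σ * taylorCoeff (genFun σ) m := by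
  have hf : AnalyticAt ℂ (genFun σ) 0 := analyticAt_genFun (by simp)
  have hf_smooth (n : ℕ) : ContDiffAt ℂ n (genFun σ) 0 := hf.contDiffAt
  have hf'_smooth (n : ℕ) : ContDiffAt ℂ n (deriv (genFun σ)) 0 := hf.deriv.contDiffAt
  rw [← taylorCoeff_deriv, taylorCoeff_congr deriv_genFun_eventuallyEq,
    taylorCoeff_add (by fun_prop) (by fun_prop), taylorCoeff_const_mul]

lemma taylorCoeff_genFun_zero : taylorCoeff (genFun σ) 0 = 1 := by
  simp [taylorCoeff, genFun]

lemma taylorCoeff_genFun_one : taylorCoeff (genFun σ) 1 = 2 * σ := by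
  simpa [taylorCoeff_id_mul_zero, taylorCoeff_genFun_zero] using
    succ_mul_taylorCoeff_genFun (σ := σ) 0

lemma taylorCoeff_genFun_add_two (m : ℕ) :
    (m + 2) * taylorCoeff (genFun σ) (m + 2) =
      2 * σ * taylorCoeff (genFun σ) (m + 1) + m * taylorCoeff (genFun σ) m := by
  have hf'_smooth (n : ℕ) : ContDiffAt ℂ n (deriv (genFun σ)) 0 :=
    (analyticAt_genFun (by simp)).deriv.contDiffAt
  have h := succ_mul_taylorCoeff_genFun (σ := σ) (m + 1)
  rw [taylorCoeff_id_mul_succ (by fun_prop)] at h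
  rcases m with _ | k
  · simp [taylorCoeff_id_mul_zero] at h ⊢
    linear_combination h
  · rw [taylorCoeff_id_mul_succ (by fun_prop), taylorCoeff_deriv] at h
    push_cast at h ⊢
    linear_combination h

variable (σ) in
noncomputable def binom (k : ℕ) : ℂ := (descPochhammer ℂ k).eval σ / k.factorial

lemma succ_mul_binom_succ (k : ℕ) : (k + 1) * binom σ (k + 1) = (σ - k) * binom σ k := by
  have : (k.factorial : ℂ) ≠ 0 := by exact_mod_cast k.factorial_ne_zero
  rw [binom, binom, descPochhammer_succ_eval, Nat.factorial_succ]
  push_cast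
  field_simp

variable (σ) in
noncomputable def binomSum (p : ℕ) : ℂ :=
  ∑ j ∈ range (p + 1), 2 ^ (j + 1) * p.choose j * binom σ (j + 1)

lemma _root_.Nat.add_three_mul_choose_add_one (p j : ℕ) :
    (p + 3) * (p + 2).choose (j + 1) =
      (j + 2) * (p + 1).choose j + 2 * (j + 2) * (p + 1).choose (j + 1) +
        (p + 1) * p.choose (j + 1) := by
  have hpascal : (p + 3).choose (j + 2) =
      (p + 1).choose j + 2 * (p + 1).choose (j + 1) + (p + 1).choose (j + 2) := by
    rw [Nat.choose_succ_succ' (p + 2), Nat.choose_succ_succ' (p + 1) j,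
      Nat.choose_succ_succ' (p + 1) (j + 1)]
    ring
  rw [Nat.add_one_mul_choose_eq (p + 2), Nat.add_one_mul_choose_eq p, hpascal]
  ring

lemma binomSum_eq_sum_range {p N : ℕ} (hN : p + 1 ≤ N) :
    binomSum σ p = ∑ j ∈ range N, 2 ^ (j + 1) * p.choose j * binom σ (j + 1) := by
  refine sum_subset (range_subset_range.2 hN) fun j hjN hjp => ?_
  rw [Nat.choose_eq_zero_of_lt (by simpa using hjp), Nat.cast_zero, mul_zero, zero_mul]

lemma binomSum_add_two (p : ℕ) :
    (p + 3) * binomSum σ (p + 2) = 2 * σ * binomSum σ (p + 1) + (p + 1) * binomSum σ p := by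
  -- `X j + Y j` splits `2σ` times the `j`-th term of `binomSum σ (p + 1)`; once the `X`-sum is
  -- shifted by one, the coefficients of `binom σ (j + 2)` agree by
  -- `Nat.add_three_mul_choose_add_one`.
  set X : ℕ → ℂ := fun j => 2 ^ (j + 2) * (j + 2) * (p + 1).choose j * binom σ (j + 2)
  set Y : ℕ → ℂ := fun j => 2 ^ (j + 2) * (j + 1) * (p + 1).choose j * binom σ (j + 1)
  have hsplit (j : ℕ) :
      2 * σ * (2 ^ (j + 1) * (p + 1).choose j * binom σ (j + 1)) = X j + Y j := by
    have := succ_mul_binom_succ (σ := σ) (j + 1)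
    push_cast at this
    linear_combination (-2 ^ (j + 2) * ((p + 1).choose j : ℂ)) * this
  have hterm (j : ℕ) : (p + 3) * (2 ^ (j + 1 + 1) * (p + 2).choose (j + 1) * binom σ (j + 1 + 1)) =
      X j + Y (j + 1) + (p + 1) * (2 ^ (j + 1 + 1) * p.choose (j + 1) * binom σ (j + 1 + 1)) := by
    have := congrArg (Nat.cast : ℕ → ℂ) (Nat.add_three_mul_choose_add_one p j)
    push_cast at this
    simp only [X, Y]
    push_cast
    linear_combination (2 ^ (j + 2) * binom σ (j + 2)) * this
  rw [binomSum_eq_sum_range (N := p + 3) le_rfl, binomSum_eq_sum_range (N := p + 3) (by omega),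
    binomSum_eq_sum_range (N := p + 3) (by omega), mul_sum, mul_sum, mul_sum]
  simp_rw [hsplit]
  rw [sum_add_distrib, sum_range_succ' _ (p + 2), sum_range_succ X, sum_range_succ' Y,
    sum_range_succ' _ (p + 2)]
  have hX : X (p + 2) = 0 := by simp [X]
  simp_rw [hterm, sum_add_distrib, hX]
  simp only [Y]
  push_cast
  simp only [Nat.choose_zero_right]
  ring

lemma mul_poch_one_sub (j : ℕ) :
    σ * poch (1 - σ) j = (-1) ^ j * (j + 1).factorial * binom σ (j + 1) := by
  have : ((j + 1).factorial : ℂ) ≠ 0 := by exact_mod_cast (j + 1).factorial_ne_zero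
  rw [binom, poch, show 1 - σ = -(σ - 1) by ring, ascPochhammer_eval_neg_eq_descPochhammer,
    descPochhammer_succ_left]
  simp only [Polynomial.eval_mul, Polynomial.eval_X, Polynomial.eval_comp, Polynomial.eval_sub,
    Polynomial.eval_one]
  field_simp

lemma two_mul_sum_poch_eq_binomSum (p : ℕ) :
    2 * σ * ∑ j ∈ range (p + 1),
        poch (1 - ((p + 1 : ℕ) : ℂ)) j * poch (1 - σ) j / (poch 2 j * j.factorial) * 2 ^ j =
      binomSum σ p := by
  rw [binomSum, mul_sum]
  refine sum_congr rfl fun j _ => ?_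
  have hfac : (j.factorial : ℂ) ≠ 0 := by exact_mod_cast j.factorial_ne_zero
  have hfac' : ((j + 1).factorial : ℂ) ≠ 0 := by exact_mod_cast (j + 1).factorial_ne_zero
  have hsign : ((-1 : ℂ) ^ j) ^ 2 = 1 := by rw [← pow_mul, mul_comm, pow_mul]; norm_num
  rw [show 1 - ((p + 1 : ℕ) : ℂ) = -(p : ℂ) by push_cast; ring, poch_neg_natCast, poch_two]
  field_simp
  linear_combination (2 * (-1) ^ j * 2 ^ j * (p.choose j : ℂ)) * mul_poch_one_sub (σ := σ) j
    + (2 ^ (j + 1) * (p.choose j : ℂ) * (j + 1).factorial * binom σ (j + 1)) * hsign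

lemma eq_of_recurrence {u v : ℕ → ℂ} (h₀ : u 0 = v 0) (h₁ : u 1 = v 1)
    (hu : ∀ p : ℕ, (p + 3) * u (p + 2) = 2 * σ * u (p + 1) + (p + 1) * u p)
    (hv : ∀ p : ℕ, (p + 3) * v (p + 2) = 2 * σ * v (p + 1) + (p + 1) * v p) : u = v := by
  have key : ∀ p, u p = v p ∧ u (p + 1) = v (p + 1) := by
    intro p
    induction p with
    | zero => exact ⟨h₀, h₁⟩
    | succ p ih =>
      refine ⟨ih.2, mul_left_cancel₀ (by norm_cast : (p + 3 : ℂ) ≠ 0) ?_⟩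
      rw [hu, hv, ih.1, ih.2]
  exact funext fun p => (key p).1

lemma taylorCoeff_genFun_succ (p : ℕ) : taylorCoeff (genFun σ) (p + 1) = binomSum σ p := by
  refine congrFun (eq_of_recurrence (σ := σ) (u := fun p => taylorCoeff (genFun σ) (p + 1))
    ?_ ?_ (fun p => ?_) binomSum_add_two) p
  · simp [taylorCoeff_genFun_one, binomSum, binom]
  · have h := taylorCoeff_genFun_add_two (σ := σ) 0
    simp [taylorCoeff_genFun_one, binomSum, binom, sum_range_succ, descPochhammer_succ_eval,
      Nat.factorial] at h ⊢
    linear_combination h / 2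
  · have h := taylorCoeff_genFun_add_two (σ := σ) (p + 1)
    push_cast at h
    linear_combination h

end MittagLeffler

theorem mittagLeffler_formula (σ : ℂ) :
    mittagLeffler 0 σ = 1 ∧
    ∀ n : ℕ, 1 ≤ n →
      mittagLeffler n σ =
        2 * σ * ∑ j ∈ Finset.range n,
          poch (1 - (n : ℂ)) j * poch (1 - σ) j / (poch 2 j * (Nat.factorial j)) * 2 ^ j := by
  refine ⟨MittagLeffler.taylorCoeff_genFun_zero, fun n hn => ?_⟩
  obtain ⟨p, rfl⟩ := Nat.exists_eq_add_of_le' hn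
  exact (MittagLeffler.taylorCoeff_genFun_succ p).trans
    (MittagLeffler.two_mul_sum_poch_eq_binomSum p).symm
end

section
/- Let τ, ρ ∈ ℂ and s ∈ ℂ, and define g_n(τ, ρ, s) = ((ρ)_n / n!) · ∑_{j=0}^{n} [(-n)_j (τ)_j / ((ρ)_j j!)] s^j (assuming (ρ)_j ≠ 0 for j ≤ n). Then for complex z with |z| < 1 and |z(1-s)| < 1, (1-z)^{τ-ρ} (1 - (1-s)z)^{-τ} = ∑_{n=0}^∞ g_n(τ, ρ, s) z^n. -/
/-- The Gauss hypergeometric polynomial coefficient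
`g_n(τ, ρ, s) = ((ρ)_n / n!) · F(-n, τ; ρ; s)`. -/
noncomputable def gaussPoly (n : ℕ) (τ ρ s : ℂ) : ℂ :=
  poch ρ n / (Nat.factorial n) *
    ∑ j ∈ Finset.range (n + 1),
      poch (-(n : ℂ)) j * poch τ j / (poch ρ j * (Nat.factorial j)) * s ^ j

/-!
Both factors are binomial series, `(1 - x) ^ (-a) = ∑ₙ multichoose a n * xⁿ` for `‖x‖ < 1`, so the
product is their Cauchy product. Its `n`-th coefficient
`∑ₖ (τ)ₖ/k! (1 - s)ᵏ (ρ - τ)ₙ₋ₖ/(n - k)!` turns into `gₙ(τ, ρ, s)`, written with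
`(ρ)ₙ / (ρ)ⱼ = (ρ + j)ₙ₋ⱼ`, after expanding `(1 - s)ᵏ` binomially, exchanging the two sums and
evaluating the inner one by Chu–Vandermonde.
-/

open Finset Nat

namespace Ring

section Ring

variable {R : Type*} [Ring R] [BinomialRing R]

-- `choose_neg'` (`choose (-r) n = (-1)ⁿ • multichoose r n`) transfers `choose` identities here.
theorem multichoose_add {r s : R} (h : Commute r s) (n : ℕ) :
    multichoose (r + s) n = ∑ ij ∈ antidiagonal n, multichoose r ij.1 * multichoose s ij.2 := by
  have hneg := add_choose_eq n h.neg_left.neg_right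
  rw [← neg_add, choose_neg'] at hneg
  rw [← smul_left_cancel_iff (Int.negOnePow (n : ℤ)), hneg, smul_sum]
  refine sum_congr rfl fun ij hij => ?_
  rw [choose_neg', choose_neg', ← mem_antidiagonal.mp hij, Nat.cast_add, Int.negOnePow_add,
    smul_mul_smul_comm]

theorem choose_smul_multichoose (r : R) {j k : ℕ} (hjk : j ≤ k) :
    k.choose j • multichoose r k = multichoose r j * multichoose (r + j) (k - j) := by
  have hneg := choose_smul_choose (-r) hjk
  rw [choose_neg', sub_eq_add_neg, ← neg_add, choose_neg', choose_neg', smul_mul_smul_comm,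
    ← Int.negOnePow_add, ← Nat.cast_add, Nat.add_sub_cancel' hjk, smul_comm] at hneg
  exact smul_left_cancel _ hneg

end Ring

section CommRing

variable {R : Type*} [CommRing R] [BinomialRing R]

theorem sum_range_multichoose_mul_multichoose (r s : R) (n : ℕ) :
    ∑ k ∈ range (n + 1), multichoose r k * multichoose s (n - k) = multichoose (r + s) n := by
  rw [multichoose_add (Commute.all r s),
    Nat.sum_antidiagonal_eq_sum_range_succ fun k l => multichoose r k * multichoose s l]

theorem sum_multichoose_mul_one_sub_pow (a b s : R) (n : ℕ) :
    ∑ k ∈ range (n + 1), multichoose a k * (1 - s) ^ k * multichoose (b - a) (n - k) =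
      ∑ j ∈ range (n + 1), multichoose a j * (-s) ^ j * multichoose (b + j) (n - j) := by
  calc _ = ∑ k ∈ range (n + 1), ∑ j ∈ range (k + 1),
          multichoose a j * (-s) ^ j * (multichoose (a + j) (k - j) *
            multichoose (b - a) (n - (j + (k - j)))) := by
        refine sum_congr rfl fun k _ => ?_
        rw [sub_eq_neg_add, add_pow, mul_sum, sum_mul]
        refine sum_congr rfl fun j hj => ?_
        have hjk : j ≤ k := Nat.lt_succ_iff.mp (mem_range.mp hj)
        rw [Nat.add_sub_cancel' hjk]
        linear_combination (-s) ^ j * multichoose (b - a) (n - k) * choose_smul_multichoose a hjk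
    _ = ∑ j ∈ range (n + 1), ∑ m ∈ range (n + 1 - j),
          multichoose a j * (-s) ^ j * (multichoose (a + j) m *
            multichoose (b - a) (n - (j + m))) :=
        sum_range_diag_flip (n + 1) fun j m => multichoose a j * (-s) ^ j *
          (multichoose (a + j) m * multichoose (b - a) (n - (j + m)))
    _ = _ := by
        refine sum_congr rfl fun j hj => ?_
        have hjn : j ≤ n := Nat.lt_succ_iff.mp (mem_range.mp hj)
        rw [← mul_sum, show n + 1 - j = n - j + 1 by omega]
        simp_rw [← Nat.sub_sub]
        rw [sum_range_multichoose_mul_multichoose, add_comm a, add_add_sub_cancel, add_comm]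

end CommRing

end Ring

lemma poch_add (a : ℂ) (m k : ℕ) : poch a (m + k) = poch a m * poch (a + m) k := by
  simp [poch, ← ascPochhammer_mul, Polynomial.eval_comp]

lemma poch_neg_natCast_s4 (n k : ℕ) : poch (-n) k = (-1) ^ k * n.descFactorial k := by
  rw [poch, ascPochhammer_eval_neg_eq_descPochhammer, descPochhammer_eval_eq_descFactorial]

lemma multichoose_eq_poch_div_factorial (a : ℂ) (n : ℕ) :
    Ring.multichoose a n = poch a n / n ! := by
  rw [eq_div_iff (by exact_mod_cast n.factorial_ne_zero), poch,
    ← Polynomial.ascPochhammer_smeval_eq_eval, ← Ring.factorial_nsmul_multichoose_eq_ascPochhammer,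
    nsmul_eq_mul, mul_comm]

lemma gaussPoly_eq_sum_multichoose (τ ρ s : ℂ) {n : ℕ} (hρ : ∀ j ≤ n, poch ρ j ≠ 0) :
    gaussPoly n τ ρ s =
      ∑ j ∈ range (n + 1), Ring.multichoose τ j * (-s) ^ j * Ring.multichoose (ρ + j) (n - j) := by
  rw [gaussPoly, mul_sum]
  refine sum_congr rfl fun j hj => ?_
  have hjn : j ≤ n := Nat.lt_succ_iff.mp (mem_range.mp hj)
  have hfac : ((n - j)! * n.descFactorial j : ℂ) = n ! := by
    exact_mod_cast Nat.factorial_mul_descFactorial hjn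
  have hsplit : poch ρ n = poch ρ j * poch (ρ + j) (n - j) := by
    rw [← poch_add, Nat.add_sub_cancel' hjn]
  rw [multichoose_eq_poch_div_factorial, multichoose_eq_poch_div_factorial,
    poch_neg_natCast_s4, hsplit, ← hfac]
  have hdesc : (n.descFactorial j : ℂ) ≠ 0 := by
    exact_mod_cast mt Nat.descFactorial_eq_zero_iff_lt.mp (not_lt.mpr hjn)
  have hρj := hρ j hjn
  field_simp
  ring

lemma hasFPowerSeriesOnBall_one_sub_cpow_neg (a : ℂ) :
    HasFPowerSeriesOnBall (fun x ↦ (1 - x) ^ (-a)) (.ofScalars ℂ (Ring.multichoose a)) 0 1 := by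
  rw [funext (Ring.multichoose_eq a)]
  exact (Complex.one_div_one_sub_cpow_hasFPowerSeriesOnBall_zero a).congr fun x _ => by
    simp [Complex.cpow_neg]

lemma hasSum_multichoose_mul_pow (a : ℂ) {x : ℂ} (hx : ‖x‖ < 1) :
    HasSum (fun n ↦ Ring.multichoose a n * x ^ n) ((1 - x) ^ (-a)) := by
  simpa [FormalMultilinearSeries.ofScalars_apply_eq, mul_comm] using
    (hasFPowerSeriesOnBall_one_sub_cpow_neg a).hasSum (y := x)
      (by simpa [Metric.mem_eball, ← ENNReal.coe_one, ← NNReal.coe_lt_coe] using hx)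

lemma summable_norm_multichoose_mul_pow (a : ℂ) {x : ℂ} (hx : ‖x‖ < 1) :
    Summable (fun n ↦ ‖Ring.multichoose a n * x ^ n‖) := by
  have hx' : x ∈ Metric.eball (0 : ℂ) 1 := by
    simpa [Metric.mem_eball, ← ENNReal.coe_one, ← NNReal.coe_lt_coe] using hx
  simpa [FormalMultilinearSeries.ofScalars_apply_eq, mul_comm] using
    FormalMultilinearSeries.summable_norm_apply _
      (Metric.eball_subset_eball (hasFPowerSeriesOnBall_one_sub_cpow_neg a).r_le hx')

theorem gaussPoly_generating_function (τ ρ s z : ℂ)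
    (hρ : ∀ j : ℕ, poch ρ j ≠ 0) (hz : ‖z‖ < 1) (hzs : ‖z * (1 - s)‖ < 1) :
    HasSum (fun n : ℕ => gaussPoly n τ ρ s * z ^ n)
      ((1 - z) ^ (τ - ρ) * (1 - (1 - s) * z) ^ (-τ)) := by
  rw [mul_comm z] at hzs
  have hprod := hasSum_sum_range_mul_of_summable_norm
    (summable_norm_multichoose_mul_pow τ hzs) (summable_norm_multichoose_mul_pow (ρ - τ) hz)
  rw [(hasSum_multichoose_mul_pow τ hzs).tsum_eq, (hasSum_multichoose_mul_pow (ρ - τ) hz).tsum_eq,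
    mul_comm ((1 - (1 - s) * z) ^ (-τ)), neg_sub] at hprod
  refine hprod.congr_fun fun n => ?_
  rw [gaussPoly_eq_sum_multichoose τ ρ s fun j _ => hρ j,
    ← Ring.sum_multichoose_mul_one_sub_pow τ ρ s n, sum_mul]
  refine sum_congr rfl fun k hk => ?_
  obtain ⟨m, rfl⟩ := Nat.exists_eq_add_of_le (Nat.lt_succ_iff.mp (mem_range.mp hk))
  rw [Nat.add_sub_cancel_left, mul_pow, pow_add]
  ring
end

section
/- For τ ∈ ℂ, η ∈ ℂ with 0 < |η| < 1, define Ĝ_n(τ, ρ, η) as the n-th Taylor coefficient at ζ = 0 of (1 + ηζ)^τ (1 + ζ/η)^{-τ} (1 - ζ²)^{-ρ}. Then Ĝ_n(τ, ρ, η) = (-1)^n ∑_{k=0}^{⌊n/2⌋} [(ρ)_k / k!] g_{n-2k}(τ, 0, (η²-1)/η²) η^{n-2k}, where g_m(τ, 0, s) is the m-th Taylor coefficient at z = 0 of (1-z)^τ (1-(1-s)z)^{-τ}. -/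
/-- `Ĝ_n(τ, ρ, η)`: `n`-th Taylor coefficient at `ζ = 0` of
`(1 + ηζ)^τ (1 + ζ/η)^{-τ} (1 - ζ²)^{-ρ}`. -/
noncomputable def Ghat (n : ℕ) (τ ρ η : ℂ) : ℂ :=
  taylorCoeff (fun ζ => (1 + η * ζ) ^ τ * (1 + ζ / η) ^ (-τ) * (1 - ζ ^ 2) ^ (-ρ)) n

/-- `g_m(τ, 0, s)`: `m`-th Taylor coefficient at `z = 0` of `(1-z)^τ (1-(1-s)z)^{-τ}`. -/
noncomputable def gPoly (m : ℕ) (τ s : ℂ) : ℂ :=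
  taylorCoeff (fun z => (1 - z) ^ τ * (1 - (1 - s) * z) ^ (-τ)) m

/-
The generating function of `Ĝ_n` is the product of `(1 - ζ²)^{-ρ}`, whose Taylor coefficients are
`(ρ)_k / k!` at `ζ^{2k}` and `0` at odd powers (the binomial series in `ζ²`), and of
`(1 + ηζ)^τ (1 + ζ/η)^{-τ}`, which is the generating function of `g_m(τ, 0, s)` evaluated at
`z = -ηζ`, because `1 - (1 - s)(-ηζ) = 1 + ζ/η` for `s = (η² - 1)/η²`. By the Leibniz rule the
Taylor coefficients of a product form the Cauchy product, in which only the even indices of the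
first factor survive.
-/

open FormalMultilinearSeries

section PowerSeries

variable {𝕜 : Type*} [NontriviallyNormedField 𝕜] {f : 𝕜 → 𝕜} {a : ℕ → 𝕜}

theorem HasFPowerSeriesAt.comp_const_mul (hf : HasFPowerSeriesAt f (ofScalars 𝕜 a) 0) (c : 𝕜) :
    HasFPowerSeriesAt (fun z => f (c * z)) (ofScalars 𝕜 fun n => c ^ n * a n) 0 := by
  set u : 𝕜 →L[𝕜] 𝕜 := c • ContinuousLinearMap.id 𝕜 𝕜
  have hu : (ofScalars 𝕜 a).compContinuousLinearMap u = ofScalars 𝕜 fun n => c ^ n * a n := by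
    ext n
    have hc : (⇑u ∘ fun _ : Fin n => (1 : 𝕜)) = fun _ => c := by
      funext; simp [u]
    simp only [compContinuousLinearMap_apply, hc, ofScalars_apply_eq, smul_eq_mul, one_pow, mul_one,
      mul_comm]
  rw [← map_zero u] at hf
  simpa [hu, Function.comp_def, u] using hf.compContinuousLinearMap

theorem HasFPowerSeriesAt.comp_pow (hf : HasFPowerSeriesAt f (ofScalars 𝕜 a) 0) {m : ℕ}
    (hm : m ≠ 0) :
    HasFPowerSeriesAt (fun z => f (z ^ m))
      (ofScalars 𝕜 fun n => if m ∣ n then a (n / m) else 0) 0 := by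
  obtain ⟨r, hr⟩ := hf
  refine ⟨min r 1, ?_, lt_min hr.r_pos one_pos, fun {y} hy => ?_⟩
  · refine ENNReal.le_of_forall_nnreal_lt fun t ht => ?_
    have htm : ((t ^ m : NNReal) : ENNReal) < (ofScalars 𝕜 a).radius := by
      have ht1 : (t : ENNReal) ≤ 1 := ht.le.trans (min_le_right _ _)
      calc ((t ^ m : NNReal) : ENNReal) = (t : ENNReal) ^ m := by push_cast; rfl
        _ ≤ t := pow_le_of_le_one bot_le ht1 hm
        _ < r := ht.trans_le (min_le_left _ _)
        _ ≤ _ := hr.r_le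
    obtain ⟨C, hC0, hC⟩ := (ofScalars 𝕜 a).norm_mul_pow_le_of_lt_radius htm
    refine le_radius_of_bound _ C fun n => ?_
    by_cases hmn : m ∣ n
    · obtain ⟨k, rfl⟩ := hmn
      simpa [ofScalars_norm, hm, pow_mul] using hC k
    · simpa [ofScalars_norm, hmn] using hC0.le
  · have hym : y ^ m ∈ Metric.eball (0 : 𝕜) r := by
      rw [mem_eball_zero_iff] at hy ⊢
      calc (‖y ^ m‖₊ : ENNReal) = (‖y‖₊ : ENNReal) ^ m := by simp
        _ ≤ ‖y‖₊ := pow_le_of_le_one bot_le (hy.le.trans (min_le_right _ _)) hm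
        _ < r := hy.trans_le (min_le_left _ _)
    rw [zero_add, ← (mul_right_injective₀ hm).hasSum_iff]
    · simpa [Function.comp_def, ofScalars_apply_eq, pow_mul, hm] using hr.hasSum hym
    · intro n hn
      have hmn : ¬ m ∣ n := fun ⟨k, hk⟩ => hn ⟨k, hk.symm⟩
      simp [hmn]

end PowerSeries

section TaylorCoeff

variable {f g : ℂ → ℂ} {a : ℕ → ℂ}

theorem taylorCoeff_eq_of_hasFPowerSeriesAt (hf : HasFPowerSeriesAt f (ofScalars ℂ a) 0)
    (n : ℕ) : taylorCoeff f n = a n :=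
  congrFun (ofScalars_series_injective ℂ ℂ
    (hf.analyticAt.hasFPowerSeriesAt.eq_formalMultilinearSeries hf)) n

theorem taylorCoeff_mul {n : ℕ} (hf : ContDiffAt ℂ n f 0) (hg : ContDiffAt ℂ n g 0) :
    taylorCoeff (f * g) n =
      ∑ i ∈ Finset.range (n + 1), taylorCoeff f i * taylorCoeff g (n - i) := by
  rw [taylorCoeff, iteratedDeriv_mul hf hg, Finset.sum_div]
  refine Finset.sum_congr rfl fun i hi => ?_
  rw [Nat.cast_choose ℂ (Finset.mem_range_succ_iff.mp hi), taylorCoeff, taylorCoeff]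
  have : (n.factorial : ℂ) ≠ 0 := Nat.cast_ne_zero.mpr n.factorial_ne_zero
  field_simp

end TaylorCoeff

theorem Ring.choose_add_sub_one_eq_poch (ρ : ℂ) (k : ℕ) :
    Ring.choose (ρ + k - 1) k = poch ρ k / k.factorial := by
  rw [← Ring.multichoose_eq, eq_div_iff (Nat.cast_ne_zero.mpr k.factorial_ne_zero), mul_comm,
    ← nsmul_eq_mul, Ring.factorial_nsmul_multichoose_eq_ascPochhammer,
    Polynomial.ascPochhammer_smeval_eq_eval, poch]

theorem hasFPowerSeriesAt_one_sub_cpow_neg (ρ : ℂ) :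
    HasFPowerSeriesAt (fun w => (1 - w) ^ (-ρ))
      (ofScalars ℂ fun k => poch ρ k / k.factorial) 0 := by
  simpa [Complex.cpow_neg, Ring.choose_add_sub_one_eq_poch] using
    (Complex.one_div_one_sub_cpow_hasFPowerSeriesOnBall_zero ρ).hasFPowerSeriesAt

theorem taylorCoeff_one_sub_sq_cpow_neg (ρ : ℂ) (j : ℕ) :
    taylorCoeff (fun ζ => (1 - ζ ^ 2) ^ (-ρ)) j =
      if 2 ∣ j then poch ρ (j / 2) / (j / 2).factorial else 0 :=
  taylorCoeff_eq_of_hasFPowerSeriesAt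
    ((hasFPowerSeriesAt_one_sub_cpow_neg ρ).comp_pow two_ne_zero) j

theorem taylorCoeff_one_add_mul_cpow_mul_one_add_div_cpow_neg (τ η : ℂ) (i : ℕ) :
    taylorCoeff (fun ζ => (1 + η * ζ) ^ τ * (1 + ζ / η) ^ (-τ)) i =
      (-η) ^ i * gPoly i τ ((η ^ 2 - 1) / η ^ 2) := by
  have hg : HasFPowerSeriesAt
      (fun z => (1 - z) ^ τ * (1 - (1 - (η ^ 2 - 1) / η ^ 2) * z) ^ (-τ))
      (ofScalars ℂ fun m => gPoly m τ ((η ^ 2 - 1) / η ^ 2)) 0 :=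
    AnalyticAt.hasFPowerSeriesAt (by fun_prop (disch := simp))
  have hsubst (ζ : ℂ) : 1 + ζ / η = 1 - (1 - (η ^ 2 - 1) / η ^ 2) * (-η * ζ) := by
    rcases eq_or_ne η 0 with rfl | hη
    · simp -- `ζ / 0 = 0`, so both sides are `1`
    · field_simp
      ring
  simpa only [hsubst, neg_mul, sub_neg_eq_add] using
    taylorCoeff_eq_of_hasFPowerSeriesAt (hg.comp_const_mul (-η)) i

theorem Finset.sum_range_succ_ite_two_dvd {M : Type*} [AddCommMonoid M] (u : ℕ → M) (n : ℕ) :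
    ∑ j ∈ range (n + 1), (if 2 ∣ j then u j else 0) = ∑ k ∈ range (n / 2 + 1), u (2 * k) := by
  rw [← sum_filter, ← sum_image (by simp : Set.InjOn (2 * ·) _)]
  congr 1
  ext j
  simp only [mem_filter, mem_range, mem_image]
  constructor
  · rintro ⟨hj, k, rfl⟩
    exact ⟨k, by omega, rfl⟩
  · rintro ⟨k, hk, rfl⟩
    omega

theorem neg_pow_sub_two_mul {R : Type*} [Monoid R] [HasDistribNeg R] (x : R) {n k : ℕ}
    (hk : 2 * k ≤ n) : (-x) ^ (n - 2 * k) = (-1) ^ n * x ^ (n - 2 * k) := by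
  obtain ⟨j, rfl⟩ := Nat.exists_eq_add_of_le hk
  rw [Nat.add_sub_cancel_left, neg_pow, pow_add, pow_mul, neg_one_sq, one_pow, one_mul]

theorem Ghat_eq_sum_general (n : ℕ) (τ ρ η : ℂ) :
    Ghat n τ ρ η =
      (-1 : ℂ) ^ n * ∑ k ∈ Finset.range (n / 2 + 1),
        poch ρ k / (Nat.factorial k) * gPoly (n - 2 * k) τ ((η ^ 2 - 1) / η ^ 2) *
          η ^ (n - 2 * k) := by
  have hB : AnalyticAt ℂ (fun ζ : ℂ => (1 - ζ ^ 2) ^ (-ρ)) 0 := by fun_prop (disch := simp)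
  have hF : AnalyticAt ℂ (fun ζ : ℂ => (1 + η * ζ) ^ τ * (1 + ζ / η) ^ (-τ)) 0 := by
    fun_prop (disch := simp)
  have hGhat : Ghat n τ ρ η = taylorCoeff ((fun ζ => (1 - ζ ^ 2) ^ (-ρ)) *
      fun ζ => (1 + η * ζ) ^ τ * (1 + ζ / η) ^ (-τ)) n :=
    congrArg (taylorCoeff · n) (funext fun _ => mul_comm _ _)
  rw [hGhat, taylorCoeff_mul hB.contDiffAt hF.contDiffAt]
  simp only [taylorCoeff_one_sub_sq_cpow_neg, taylorCoeff_one_add_mul_cpow_mul_one_add_div_cpow_neg,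
    ite_mul, zero_mul]
  rw [Finset.sum_range_succ_ite_two_dvd, Finset.mul_sum]
  refine Finset.sum_congr rfl fun k hk => ?_
  rw [Nat.mul_div_cancel_left k two_pos,
    neg_pow_sub_two_mul η (by have := Finset.mem_range.mp hk; omega)]
  ring

theorem Ghat_eq_sum (n : ℕ) (τ ρ η : ℂ) (hη0 : η ≠ 0) (hη1 : ‖η‖ < 1) :
    Ghat n τ ρ η =
      (-1 : ℂ) ^ n * ∑ k ∈ Finset.range (n / 2 + 1),
        poch ρ k / (Nat.factorial k) * gPoly (n - 2 * k) τ ((η ^ 2 - 1) / η ^ 2) *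
          η ^ (n - 2 * k) :=
  Ghat_eq_sum_general n τ ρ η
end

section
/- Let n ∈ ℕ, τ ∈ ℂ with λ = n + τ ≠ 0 and |τ(1-τ)/λ| < 1. Let w: [0,∞) → ℂ solve the initial value problem w'' + 2λ w' - τ(1-τ) sech²(α) · w = 0 with w(0) = f₀ = (1+(-1)^n)/2 and w'(0) = λ f₁ where f₁ = (1-(-1)^n)/λ - f₀. Then for all α ≥ 0, |w(α) - f₁(1 - e^{-2λα})/2 - f₀| ≤ |τ(1-τ)/λ| · tanh(α) · B_n(τ) / (1 - |τ(1-τ)/λ|), where B_n(τ) = 2 if n is even and B_n(τ) = 2/|n+τ| if n is odd. (Assume Re λ ≥ 0 so that |1 - e^{-2λ(α-s)}| ≤ 2 for 0 ≤ s ≤ α.) -/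
/-!
Put `λ = n + τ` and `μ = τ(1-τ)`. Variation of constants turns the ODE into the Volterra equation
`w(α) = w₀(α) + (μ/2λ) ∫₀^α (1 - e^{-2λ(α-s)}) sech²(s) w(s) ds`, where `w₀` is the solution of
`w'' + 2λw' = 0` with the same initial data. As `Re λ ≥ 0` the kernel is bounded by `2`, and
`∫₀^α sech² = tanh α`; with `|w₀| ≤ B_n` this gives `|w - w₀| ≤ |μ/λ| tanh(α) (M + B_n)` on `[0, α]`,
where `M` is the maximum of `|w - w₀|` there. At the maximum point this reads
`M ≤ |μ/λ| (M + B_n)`, i.e. `M + B_n ≤ B_n / (1 - |μ/λ|)`.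
-/

open Set MeasureTheory intervalIntegral

lemma Real.hasDerivAt_tanh (x : ℝ) : HasDerivAt Real.tanh (1 / Real.cosh x ^ 2) x := by
  rw [show Real.tanh = fun y => Real.sinh y / Real.cosh y from funext Real.tanh_eq_sinh_div_cosh]
  refine ((Real.hasDerivAt_sinh x).div (Real.hasDerivAt_cosh x)
    (Real.cosh_pos x).ne').congr_deriv ?_
  rw [← Real.cosh_sq_sub_sinh_sq x]
  ring

lemma Real.continuous_one_div_cosh_sq : Continuous fun x => 1 / Real.cosh x ^ 2 :=
  continuous_const.div (Real.continuous_cosh.pow 2) fun x => pow_ne_zero 2 (Real.cosh_pos x).ne'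

lemma Real.integral_one_div_cosh_sq (a b : ℝ) :
    ∫ x in a..b, 1 / Real.cosh x ^ 2 = Real.tanh b - Real.tanh a :=
  integral_eq_sub_of_hasDerivAt (fun x _ => Real.hasDerivAt_tanh x)
    (Real.continuous_one_div_cosh_sq.intervalIntegrable a b)

lemma Real.tanh_nonneg {x : ℝ} (hx : 0 ≤ x) : 0 ≤ Real.tanh x := by
  rw [Real.tanh_eq_sinh_div_cosh]
  exact div_nonneg (Real.sinh_nonneg_iff.2 hx) (Real.cosh_pos x).le

lemma Complex.norm_one_sub_exp_le_two {z : ℂ} (hz : z.re ≤ 0) : ‖1 - Complex.exp z‖ ≤ 2 :=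
  calc ‖1 - Complex.exp z‖ ≤ ‖(1 : ℂ)‖ + ‖Complex.exp z‖ := norm_sub_le _ _
    _ ≤ 1 + 1 := by
      rw [norm_one, Complex.norm_exp]
      gcongr
      exact Real.exp_le_one_iff.2 hz
    _ = 2 := one_add_one_eq_two

lemma Complex.re_neg_mul_ofReal_nonpos {c : ℂ} (hc : 0 ≤ c.re) {x : ℝ} (hx : 0 ≤ x) :
    (-c * x).re ≤ 0 := by
  simpa [Complex.mul_re] using mul_nonneg hc hx

lemma norm_integral_one_sub_exp_mul_le {c μ : ℂ} (hc : 0 ≤ c.re) {w : ℝ → ℂ} {x C : ℝ}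
    (hx : 0 ≤ x) (hw : ∀ s ∈ Icc 0 x, ‖w s‖ ≤ C) :
    ‖∫ s in 0..x, (1 - Complex.exp (-c * (x - s))) * (μ / (Real.cosh s : ℂ) ^ 2 * w s)‖ ≤
      2 * ‖μ‖ * C * Real.tanh x := by
  have hbound : ∀ s ∈ Ioc 0 x,
      ‖(1 - Complex.exp (-c * (x - s))) * (μ / (Real.cosh s : ℂ) ^ 2 * w s)‖ ≤
        2 * ‖μ‖ * C * (1 / Real.cosh s ^ 2) := by
    intro s hs
    have hre : (-c * (x - s)).re ≤ 0 := by
      exact_mod_cast Complex.re_neg_mul_ofReal_nonpos hc (sub_nonneg.2 hs.2)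
    rw [norm_mul, norm_mul, norm_div, norm_pow, Complex.norm_real,
      Real.norm_of_nonneg (Real.cosh_pos s).le]
    calc _ ≤ 2 * (‖μ‖ / Real.cosh s ^ 2 * C) := by
          gcongr
          · exact Complex.norm_one_sub_exp_le_two hre
          · exact hw s ⟨hs.1.le, hs.2⟩
      _ = _ := by ring
  calc _ ≤ ∫ s in 0..x, 2 * ‖μ‖ * C * (1 / Real.cosh s ^ 2) :=
        norm_integral_le_of_norm_le hx (ae_of_all _ hbound)
          ((Real.continuous_one_div_cosh_sq.intervalIntegrable 0 x).const_mul _)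
    _ = 2 * ‖μ‖ * C * Real.tanh x := by
      rw [intervalIntegral.integral_const_mul, Real.integral_one_div_cosh_sq, Real.tanh_zero,
        sub_zero]

lemma Complex.hasDerivAt_exp_const_mul_ofReal (c : ℂ) (x : ℝ) :
    HasDerivAt (fun y : ℝ => Complex.exp (c * y)) (c * Complex.exp (c * x)) x := by
  simpa [mul_comm] using (((hasDerivAt_id (x : ℂ)).const_mul c).cexp).comp_ofReal

lemma eq_duhamel_of_hasDerivAt {c : ℂ} (hc : c ≠ 0) {w w' w'' F : ℝ → ℂ}
    (hw : ∀ x, HasDerivAt w (w' x) x) (hw' : ∀ x, HasDerivAt w' (w'' x) x)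
    (hF : Continuous F) (hode : ∀ x, 0 ≤ x → w'' x + c * w' x = F x) {x : ℝ} (hx : 0 ≤ x) :
    w x = w 0 + w' 0 * (1 - Complex.exp (-c * x)) / c +
      (∫ s in 0..x, (1 - Complex.exp (-c * (x - s))) * F s) / c := by
  have hode_on : ∀ y ∈ uIcc 0 x, w'' y + c * w' y = F y := fun y hy =>
    hode y (by rw [uIcc_of_le hx] at hy; exact hy.1)
  have hw'_int :
      Complex.exp (c * x) * w' x = w' 0 + ∫ s in 0..x, Complex.exp (c * s) * F s := by
    rw [integral_eq_sub_of_hasDerivAt (f := fun y => Complex.exp (c * y) * w' y)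
      (fun y hy => ((Complex.hasDerivAt_exp_const_mul_ofReal c y).mul (hw' y)).congr_deriv
        (by rw [← hode_on y hy]; ring))
      ((by fun_prop : Continuous fun s : ℝ => Complex.exp (c * s) * F s).intervalIntegrable 0 x)]
    simp
  have hw_int : c * w x + w' x = c * w 0 + w' 0 + ∫ s in 0..x, F s := by
    rw [integral_eq_sub_of_hasDerivAt (f := fun y => c * w y + w' y)
      (fun y hy => (((hw y).const_mul c).add (hw' y)).congr_deriv
        (by rw [← hode_on y hy]; ring))
      (hF.intervalIntegrable 0 x)]
    ring
  have hkernel : ∫ s in 0..x, (1 - Complex.exp (-c * (x - s))) * F s =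
      (∫ s in 0..x, F s) - Complex.exp (-c * x) * ∫ s in 0..x, Complex.exp (c * s) * F s := by
    rw [← intervalIntegral.integral_const_mul, ← intervalIntegral.integral_sub
      (hF.intervalIntegrable 0 x) ((by fun_prop : Continuous fun s : ℝ =>
        Complex.exp (-c * x) * (Complex.exp (c * s) * F s)).intervalIntegrable 0 x)]
    congr 1 with s
    rw [show -c * (x - s) = -c * x + c * s by ring, Complex.exp_add]
    ring
  have hexp : Complex.exp (-c * x) * Complex.exp (c * x) = 1 := by
    rw [← Complex.exp_add]; simp
  rw [hkernel, add_assoc, ← add_div, ← sub_eq_iff_eq_add', eq_div_iff hc]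
  linear_combination hw_int - Complex.exp (-c * x) * hw'_int + w' x * hexp

lemma eq_duhamel_of_ode_cosh_sq {c μ : ℂ} (hc : c ≠ 0) {w w' w'' : ℝ → ℂ}
    (hw : ∀ x, HasDerivAt w (w' x) x) (hw' : ∀ x, HasDerivAt w' (w'' x) x)
    (hode : ∀ x : ℝ, 0 ≤ x → w'' x + c * w' x - μ / (Real.cosh x : ℂ) ^ 2 * w x = 0)
    {x : ℝ} (hx : 0 ≤ x) :
    w x = w 0 + w' 0 * (1 - Complex.exp (-c * x)) / c +
      (∫ s in 0..x, (1 - Complex.exp (-c * (x - s))) *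
        (μ / (Real.cosh s : ℂ) ^ 2 * w s)) / c := by
  have hF : Continuous fun s : ℝ => μ / (Real.cosh s : ℂ) ^ 2 * w s :=
    (continuous_const.div (by fun_prop) fun s => by
      exact_mod_cast (pow_pos (Real.cosh_pos s) 2).ne').mul
      (Differentiable.continuous fun x => (hw x).differentiableAt)
  exact eq_duhamel_of_hasDerivAt hc hw hw' hF (fun y hy => by linear_combination hode y hy) hx
lemma norm_free_solution_le (n : ℕ) (l : ℂ) {z : ℂ} (hz : z.re ≤ 0) :
    ‖((1 - (-1 : ℂ) ^ n) / l - (1 + (-1 : ℂ) ^ n) / 2) * (1 - Complex.exp z) / 2 +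
        (1 + (-1 : ℂ) ^ n) / 2‖ ≤ if Even n then 2 else 2 / ‖l‖ := by
  have hexp := Complex.norm_one_sub_exp_le_two hz
  rcases n.even_or_odd with hn | hn
  · rw [if_pos hn, hn.neg_one_pow]
    calc _ = ‖1 - (1 - Complex.exp z) / 2‖ := by ring_nf
      _ ≤ ‖(1 : ℂ)‖ + ‖1 - Complex.exp z‖ / 2 := by
          rw [← RCLike.norm_ofNat (K := ℂ) 2, ← norm_div]; exact norm_sub_le _ _
      _ ≤ 2 := by rw [norm_one]; linarith
  · rw [if_neg (Nat.not_even_iff_odd.2 hn), hn.neg_one_pow]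
    calc _ = ‖1 - Complex.exp z‖ / ‖l‖ := by rw [← norm_div]; ring_nf
      _ ≤ 2 / ‖l‖ := by gcongr

lemma norm_le_mul_div_one_sub_of_forall_norm_le {X E : Type*} [TopologicalSpace X]
    [NormedAddCommGroup E] {K : Set X} (hK : IsCompact K) {g : X → E} (hg : ContinuousOn g K)
    {t : X → ℝ} (ht : ∀ y ∈ K, t y ≤ 1) {q B : ℝ} (hq₀ : 0 ≤ q) (hq₁ : q < 1) (hB : 0 ≤ B)
    (h : ∀ C, (∀ y ∈ K, ‖g y‖ ≤ C) → ∀ y ∈ K, ‖g y‖ ≤ q * t y * (C + B))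
    {x : X} (hx : x ∈ K) (htx : 0 ≤ t x) : ‖g x‖ ≤ q * t x * B / (1 - q) := by
  obtain ⟨c, hc, hmax⟩ := hK.exists_isMaxOn ⟨x, hx⟩ hg.norm
  have hM : ∀ y ∈ K, ‖g y‖ ≤ ‖g c‖ := fun y hy => hmax hy
  have hMB : ‖g c‖ + B ≤ B / (1 - q) := by
    rw [le_div_iff₀ (sub_pos.2 hq₁)]
    have hself : ‖g c‖ ≤ q * (‖g c‖ + B) := (h _ hM c hc).trans
      (mul_le_mul_of_nonneg_right (mul_le_of_le_one_right hq₀ (ht c hc)) (by positivity))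
    linarith
  calc ‖g x‖ ≤ q * t x * (‖g c‖ + B) := h _ hM x hx
    _ ≤ q * t x * (B / (1 - q)) := by gcongr
    _ = q * t x * B / (1 - q) := by ring

theorem volterra_ode_estimate (n : ℕ) (τ : ℂ)
    (hlam : (n : ℂ) + τ ≠ 0)
    (hsmall : ‖τ * (1 - τ) / ((n : ℂ) + τ)‖ < 1)
    (hre : 0 ≤ ((n : ℂ) + τ).re)
    (w w' w'' : ℝ → ℂ)
    (hw : ∀ α : ℝ, HasDerivAt w (w' α) α)
    (hw' : ∀ α : ℝ, HasDerivAt w' (w'' α) α)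
    (hode : ∀ α : ℝ, 0 ≤ α →
      w'' α + 2 * ((n : ℂ) + τ) * w' α -
        τ * (1 - τ) / ((Real.cosh α : ℂ)) ^ 2 * w α = 0)
    (hw0 : w 0 = (1 + (-1 : ℂ) ^ n) / 2)
    (hw'0 : w' 0 = ((n : ℂ) + τ) *
      ((1 - (-1 : ℂ) ^ n) / ((n : ℂ) + τ) - (1 + (-1 : ℂ) ^ n) / 2)) :
    ∀ α : ℝ, 0 ≤ α →
      ‖w α - ((1 - (-1 : ℂ) ^ n) / ((n : ℂ) + τ) - (1 + (-1 : ℂ) ^ n) / 2) *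
            (1 - Complex.exp (-2 * ((n : ℂ) + τ) * α)) / 2 -
          (1 + (-1 : ℂ) ^ n) / 2‖ ≤
        ‖τ * (1 - τ) / ((n : ℂ) + τ)‖ * Real.tanh α *
          (if Even n then 2 else 2 / ‖(n : ℂ) + τ‖) /
          (1 - ‖τ * (1 - τ) / ((n : ℂ) + τ)‖) := by
  intro α hα
  set l : ℂ := (n : ℂ) + τ
  set f₀ : ℂ := (1 + (-1 : ℂ) ^ n) / 2
  set f₁ : ℂ := (1 - (-1 : ℂ) ^ n) / l - f₀
  set B : ℝ := if Even n then 2 else 2 / ‖l‖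
  have h2l_re : 0 ≤ (2 * l).re := by simpa using hre
  have hfree : ∀ s : ℝ, 0 ≤ s → ‖f₁ * (1 - Complex.exp (-2 * l * s)) / 2 + f₀‖ ≤ B :=
    fun s hs => norm_free_solution_le n l
      (by simpa [neg_mul] using Complex.re_neg_mul_ofReal_nonpos h2l_re hs)
  have hrep : ∀ a : ℝ, 0 ≤ a → w a - f₁ * (1 - Complex.exp (-2 * l * a)) / 2 - f₀ =
      (∫ s in 0..a, (1 - Complex.exp (-(2 * l) * (a - s))) *
        (τ * (1 - τ) / (Real.cosh s : ℂ) ^ 2 * w s)) / (2 * l) := by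
    intro a ha
    rw [eq_duhamel_of_ode_cosh_sq (mul_ne_zero two_ne_zero hlam) hw hw' hode ha, hw0, hw'0,
      show -(2 * l) * (a : ℂ) = -2 * l * a by ring]
    generalize (∫ s in (0 : ℝ)..a, (1 - Complex.exp (-(2 * l) * (a - s))) *
      (τ * (1 - τ) / (Real.cosh s : ℂ) ^ 2 * w s)) = I
    field_simp
    ring
  have hw_cont : Continuous w := Differentiable.continuous fun x => (hw x).differentiableAt
  refine norm_le_mul_div_one_sub_of_forall_norm_le isCompact_Icc
    (by fun_prop : Continuous fun s : ℝ =>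
      w s - f₁ * (1 - Complex.exp (-2 * l * s)) / 2 - f₀).continuousOn
    (fun y _ => (Real.tanh_lt_one y).le) (norm_nonneg _) hsmall (by positivity) ?_
    ⟨hα, le_rfl⟩ (Real.tanh_nonneg hα)
  intro C hC a ha
  have hw_le : ∀ s ∈ Icc 0 a, ‖w s‖ ≤ C + B := fun s hs =>
    calc ‖w s‖ = ‖(w s - f₁ * (1 - Complex.exp (-2 * l * s)) / 2 - f₀) +
          (f₁ * (1 - Complex.exp (-2 * l * s)) / 2 + f₀)‖ := by ring_nf
      _ ≤ C + B := (norm_add_le _ _).trans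
          (add_le_add (hC s ⟨hs.1, hs.2.trans ha.2⟩) (hfree s hs.1))
  rw [hrep a ha.1, norm_div]
  calc _ ≤ 2 * ‖τ * (1 - τ)‖ * (C + B) * Real.tanh a / ‖2 * l‖ := by
        gcongr
        exact norm_integral_one_sub_exp_mul_le h2l_re ha.1 hw_le
    _ = _ := by
        rw [norm_div, norm_mul (2 : ℂ) l, RCLike.norm_ofNat]
        field_simp
end

section
/- Let r be real with 1 < r < √2 and let τ ∈ ℂ satisfy |τ - 1| ≤ r and Re τ ≤ 1. Then |τ(1-τ)| < |1+τ|. -/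
/-!
Since `‖τ (1 - τ)‖ = ‖τ‖ ‖τ - 1‖ ≤ r ‖τ‖`, it suffices that `r² ‖τ‖² < ‖1 + τ‖²`. With `x = Re τ`,
the disc condition reads `‖τ‖² ≤ r² - 1 + 2x`, and
`1 + 2x - (r² - 1)(r² - 1 + 2x) = (2 - r²)(r² + 2x)`,
which is positive because `x ≥ 1 - r` gives `r² + 2x ≥ (r - 1)² + 1`.
-/

namespace Complex

lemma normSq_sub_one (τ : ℂ) : normSq (τ - 1) = normSq τ - 2 * τ.re + 1 := by
  simp only [normSq_sub, map_one, mul_one]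
  ring

lemma normSq_one_add (τ : ℂ) : normSq (1 + τ) = normSq τ + 2 * τ.re + 1 := by
  simp only [normSq_add, one_mul, conj_re, normSq_one]
  ring

lemma mul_norm_lt_norm_one_add_of_norm_sub_one_le {r : ℝ} (hr1 : 1 < r) (hr2 : r ^ 2 < 2)
    {τ : ℂ} (hτ : ‖τ - 1‖ ≤ r) : r * ‖τ‖ < ‖1 + τ‖ := by
  have hre : 1 - r ≤ τ.re := by
    linarith [neg_abs_le (τ - 1).re, abs_re_le_norm (τ - 1), sub_re τ 1, one_re]
  have hdisc : normSq τ ≤ r ^ 2 - 1 + 2 * τ.re := by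
    have : ‖τ - 1‖ ^ 2 ≤ r ^ 2 := pow_le_pow_left₀ (norm_nonneg _) hτ 2
    rw [Complex.sq_norm, normSq_sub_one] at this
    linarith
  have hpos : 0 < (2 - r ^ 2) * (r ^ 2 + 2 * τ.re) :=
    mul_pos (by linarith) (by nlinarith [sq_nonneg (r - 1)])
  have hsq : (r * ‖τ‖) ^ 2 < ‖1 + τ‖ ^ 2 := by
    rw [mul_pow, Complex.sq_norm, Complex.sq_norm, normSq_one_add]
    calc r ^ 2 * normSq τ = normSq τ + (r ^ 2 - 1) * normSq τ := by ring
      _ ≤ normSq τ + (r ^ 2 - 1) * (r ^ 2 - 1 + 2 * τ.re) := by gcongr; nlinarith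
      _ < normSq τ + 2 * τ.re + 1 := by linarith
  exact lt_of_pow_lt_pow_left₀ 2 (norm_nonneg _) hsq

end Complex

theorem abs_mul_lt_of_mem_region_general (r : ℝ) (hr1 : 1 < r) (hr2 : r < Real.sqrt 2)
    (τ : ℂ) (hτ : ‖τ - 1‖ ≤ r) :
    ‖τ * (1 - τ)‖ < ‖1 + τ‖ := by
  have hr2' : r ^ 2 < 2 := (Real.lt_sqrt (by linarith)).1 hr2
  calc ‖τ * (1 - τ)‖ = ‖τ‖ * ‖τ - 1‖ := by rw [norm_mul, norm_sub_rev]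
    _ ≤ ‖τ‖ * r := by gcongr
    _ = r * ‖τ‖ := mul_comm _ _
    _ < ‖1 + τ‖ := Complex.mul_norm_lt_norm_one_add_of_norm_sub_one_le hr1 hr2' hτ

theorem abs_mul_lt_of_mem_region (r : ℝ) (hr1 : 1 < r) (hr2 : r < Real.sqrt 2)
    (τ : ℂ) (hτ : ‖τ - 1‖ ≤ r) (hre : τ.re ≤ 1) :
    ‖τ * (1 - τ)‖ < ‖1 + τ‖ :=
  abs_mul_lt_of_mem_region_general r hr1 hr2 τ hτ
end
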